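/- For every n ≥ 1, there exists a rich square-free word over an alphabet of size n of length at least 2^n − 1; in particular r(n) ≥ 2^n − 1. -/

import Mathlib

/-- A word is a palindrome if it equals its reversal. -/
def Palindromic {α : Type*} (w : List α) : Prop := w.reverse = w

/-- A finite word is rich if it has exactly |w|+1 distinct palindromic factors
(including the empty word). -/
def Rich {α : Type*} (w : List α) : Prop :=
  {p : List α | p <:+: w ∧ Palindromic p}.ncard = w.length + 1

/-- A word is square-free if it has no factor of the form `u ++ u` with `u` nonempty. -/
def SqFree {α : Type*} (w : List α) : Prop :=
  ∀ u : List α, u ≠ [] → ¬ (u ++ u) <:+: w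

/-- `rsf n` : the maximal length of a rich square-free word using exactly `n` distinct
letters (letters drawn from ℕ). -/
noncomputable def rsf (n : ℕ) : ℕ :=
  sSup {L | ∃ w : List ℕ, Rich w ∧ SqFree w ∧ w.toFinset.card = n ∧ w.length = L}

/-!
The Zimin words `Z₀ = []`, `Zₙ₊₁ = Zₙ n Zₙ` give the lower bound. The letter `n` occurs once in
`Zₙ₊₁`, so a square in it avoids `n` and lies in a copy of `Zₙ`. Besides the palindromes of `Zₙ`,
`Zₙ₊₁` contains the `2 ^ n` palindromes centred at `n`, hence `2 ^ (n + 1) = |Zₙ₊₁| + 1` of them.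

The inequality for `rsf n` needs the set of lengths to be bounded. In a rich word every complete
return `c h c` is a palindrome; in a square-free word every palindrome has odd length. Together
the central letter of a palindrome occurs only once in it, so half of the palindrome is a rich
square-free word on fewer letters. By induction palindromic factors have bounded length, and
since a rich word has `|w| + 1` of them, its length is bounded too.
-/

open List

variable {α : Type*}

/-- The shorter palindrome `p` is also a prefix of the longer one `q`. -/
lemma List.IsSuffix.infix_of_palindrome {p q v : List α} {a : α} (hp : p <:+ v ++ [a])
    (hq : q <:+ v ++ [a]) (hpp : p.reverse = p) (hqq : q.reverse = q)
    (hlt : p.length < q.length) : p <:+: v := by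
  have hpq : p <+: q := by
    rw [← reverse_suffix, hpp, hqq]
    exact suffix_of_suffix_length_le hp hq hlt.le
  obtain rfl | ⟨q', rfl, hq'⟩ := suffix_concat_iff.1 hq
  · simp at hlt
  rcases prefix_concat_iff.1 hpq with rfl | hpq'
  · simp at hlt
  · exact hpq'.isInfix.trans hq'.isInfix

lemma List.infix_or_infix_of_infix_append_cons {u x y : List α} {a : α}
    (h : u <:+: x ++ a :: y) (ha : a ∉ u) : u <:+: x ∨ u <:+: y := by
  rcases infix_append_iff.1 h with hx | hy | ⟨u₁, u₂, rfl, hu₁, hu₂⟩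
  · exact .inl hx
  · rcases infix_cons_iff.1 hy with hpre | hy
    · rcases u with _ | ⟨b, u⟩
      · exact .inl nil_infix
      · exact absurd ((cons_prefix_cons.1 hpre).1 ▸ mem_cons_self) ha
    · exact .inr hy
  · rcases u₂ with _ | ⟨b, u₂⟩
    · exact .inl (by simpa using hu₁.isInfix)
    · exact absurd ((cons_prefix_cons.1 hu₂).1 ▸ by simp) ha

lemma List.infix_append_cons_of_reverse_eq {z : List α} (hz : z.reverse = z) (a : α) (i : ℕ) :
    (z.take i).reverse ++ a :: z.take i <:+: z ++ a :: z := by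
  refine ⟨z.take (z.length - i), z.drop i, ?_⟩
  have hdrop : (z.take i).reverse = z.drop (z.length - i) := by rw [reverse_take, hz]
  rw [hdrop, append_assoc, append_assoc, cons_append, take_append_drop, ← append_assoc,
    take_append_drop]

lemma SqFree.of_infix {u w : List α} (hw : SqFree w) (hu : u <:+: w) : SqFree u :=
  fun v hv hvu => hw v hv (hvu.trans hu)

/-- In a palindrome of even length the two central letters agree. -/
lemma SqFree.exists_eq_reverse_append_cons {p : List α} (hp : SqFree p) (hpal : p.reverse = p)
    (hne : p ≠ []) : ∃ B c, p = B.reverse ++ c :: B := by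
  obtain ⟨A, rest, rfl, hA⟩ : ∃ A rest, p = A ++ rest ∧ A.length = p.length / 2 :=
    ⟨p.take (p.length / 2), p.drop (p.length / 2), (take_append_drop _ _).symm,
      by rw [length_take]; omega⟩
  rcases rest with _ | ⟨c, B⟩
  · simp only [append_nil] at hA hne
    exact absurd (eq_nil_of_length_eq_zero (by omega)) hne
  have hrev : B.reverse ++ c :: A.reverse = A ++ c :: B := by simpa using hpal
  simp only [length_append, length_cons] at hA
  rcases Nat.lt_or_ge B.length A.length with hlt | hge
  · exfalso
    obtain ⟨hA', -⟩ := append_inj (by simpa using hrev) (by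
      simp only [length_append, length_reverse, length_singleton]; omega :
      (B.reverse ++ [c]).length = A.length)
    refine hp [c] (by simp) ⟨B.reverse, B, ?_⟩
    rw [← hA']
    simp
  · exact ⟨B, c, by rw [(append_inj hrev.symm (by rw [length_reverse]; omega)).1]⟩

section PalFactors

variable [DecidableEq α]

def palFactors (w : List α) : Finset (List α) :=
  w.sublists.toFinset.filter fun p => p <:+: w ∧ p.reverse = p

lemma mem_palFactors {w p : List α} : p ∈ palFactors w ↔ p <:+: w ∧ p.reverse = p := by
  simpa [palFactors] using fun h _ => h.sublist

lemma rich_iff_card_palFactors {w : List α} : Rich w ↔ (palFactors w).card = w.length + 1 := by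
  have : {p : List α | p <:+: w ∧ Palindromic p} = palFactors w := by
    ext p; simp [mem_palFactors, Palindromic]
  rw [Rich, this, Set.ncard_coe_finset]

lemma palFactors_mono {u v : List α} (h : u <:+: v) : palFactors u ⊆ palFactors v :=
  fun _ hp => have hp := mem_palFactors.1 hp; mem_palFactors.2 ⟨hp.1.trans h, hp.2⟩

lemma palFactors_reverse (w : List α) : palFactors w.reverse = palFactors w := by
  ext p
  simp only [mem_palFactors, and_congr_left_iff]
  intro hp
  rw [← reverse_infix, reverse_reverse, hp]

lemma card_palFactors_concat_le (v : List α) (a : α) :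
    (palFactors (v ++ [a])).card ≤ (palFactors v).card + 1 := by
  have hnew : ∀ p ∈ palFactors (v ++ [a]) \ palFactors v,
      p <:+ v ++ [a] ∧ p.reverse = p ∧ ¬ p <:+: v := by
    intro p hp
    simp only [Finset.mem_sdiff, mem_palFactors, not_and] at hp
    have hpv : ¬ p <:+: v := fun h => hp.2 h hp.1.2
    exact ⟨(infix_concat_iff.1 hp.1.1).resolve_right hpv, hp.1.2, hpv⟩
  have hsub : ((palFactors (v ++ [a])) \ palFactors v).card ≤ 1 := by
    refine Finset.card_le_one.2 fun p hp q hq => ?_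
    obtain ⟨hps, hpp, hpv⟩ := hnew p hp
    obtain ⟨hqs, hqq, hqv⟩ := hnew q hq
    rcases lt_trichotomy p.length q.length with h | h | h
    · exact absurd (hps.infix_of_palindrome hqs hpp hqq h) hpv
    · exact (suffix_of_suffix_length_le hps hqs h.le).eq_of_length h
    · exact absurd (hqs.infix_of_palindrome hps hqq hpp h) hqv
  have := Finset.card_le_card_sdiff_add_card (s := palFactors (v ++ [a])) (t := palFactors v)
  omega

lemma card_palFactors_le_length_add_one (w : List α) : (palFactors w).card ≤ w.length + 1 := by
  induction w using reverseRecOn with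
  | nil =>
    refine (Finset.card_le_one.2 fun p hp q hq => ?_).trans le_add_self
    simp_all [mem_palFactors]
  | append_singleton v a ih =>
    have := card_palFactors_concat_le v a
    simp only [length_append, length_singleton]
    omega

lemma rich_iff_length_lt_card_palFactors {w : List α} :
    Rich w ↔ w.length < (palFactors w).card := by
  have := card_palFactors_le_length_add_one w
  rw [rich_iff_card_palFactors]
  omega

lemma Rich.of_concat {v : List α} {a : α} (h : Rich (v ++ [a])) : Rich v := by
  rw [rich_iff_length_lt_card_palFactors] at h ⊢
  have := card_palFactors_concat_le v a
  simp only [length_append, length_singleton] at h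
  omega

lemma Rich.of_prefix {u w : List α} (h : Rich w) (hu : u <+: w) : Rich u := by
  obtain ⟨t, rfl⟩ := hu
  induction t using reverseRecOn with
  | nil => simpa using h
  | append_singleton t a ih => exact ih (by rw [← append_assoc] at h; exact h.of_concat)

lemma Rich.reverse {w : List α} (h : Rich w) : Rich w.reverse := by
  rwa [rich_iff_card_palFactors, palFactors_reverse, length_reverse, ← rich_iff_card_palFactors]

lemma Rich.of_infix {u w : List α} (h : Rich w) (hu : u <:+: w) : Rich u := by
  obtain ⟨t, hut, htw⟩ := infix_iff_prefix_suffix.1 hu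
  have ht : Rich t := by
    simpa using (h.reverse.of_prefix (reverse_prefix.2 htw)).reverse
  exact ht.of_prefix hut

lemma Rich.exists_palindrome_suffix_not_infix {v : List α} {a : α} (h : Rich (v ++ [a])) :
    ∃ q, q.reverse = q ∧ q <:+ v ++ [a] ∧ ¬ q <:+: v := by
  have hlt : (palFactors v).card < (palFactors (v ++ [a])).card := by
    rw [rich_iff_card_palFactors.1 h, rich_iff_card_palFactors.1 h.of_concat]
    simp
  obtain ⟨q, hq, hqv⟩ := Finset.exists_mem_notMem_of_card_lt_card hlt
  rw [mem_palFactors] at hq hqv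
  have hqv : ¬ q <:+: v := fun h => hqv ⟨h, hq.2⟩
  exact ⟨q, hq.2, (infix_concat_iff.1 hq.1).resolve_right hqv, hqv⟩

/-- `c h c` with `c ∉ h` is a complete return to `c`. The palindromic suffix `q` of `x c h c`
that does not occur earlier begins and ends with `c`, so either `q = c h c`, or `c h c` is a
proper suffix of `q` and its mirror image `c (reverse h) c` is a complete return ending
earlier. -/
theorem Rich.reverse_eq_of_return {x h : List α} {c : α} (hr : Rich (x ++ c :: h ++ [c]))
    (hc : c ∉ h) : h.reverse = h := by
  obtain ⟨q, hqq, hqs, hqv⟩ := hr.exists_palindrome_suffix_not_infix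
  have hret : c :: h ++ [c] <:+ x ++ c :: h ++ [c] := by simp
  rcases le_or_gt q.length (c :: h ++ [c]).length with hle | hlt
  · have hq : q <:+ c :: (h ++ [c]) := suffix_of_suffix_length_le hqs hret hle
    rcases suffix_cons_iff.1 hq with rfl | hqh
    · simpa using hqq
    exfalso
    obtain rfl | ⟨t, rfl, ht⟩ := suffix_concat_iff.1 hqh
    · exact hqv nil_infix
    rcases t with _ | ⟨b, t⟩
    · exact hqv ⟨x, h, by simp⟩
    · have hb : b = c := by simpa using congrArg head? hqq.symm
      exact hc (hb ▸ ht.subset mem_cons_self)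
  · have hpre : c :: h.reverse ++ [c] <+: q := by
      simpa [hqq] using reverse_prefix.2 (suffix_of_suffix_length_le hret hqs hlt.le)
    obtain rfl | ⟨q', rfl, hq'⟩ := suffix_concat_iff.1 hqs
    · simp at hlt
    obtain ⟨e, rfl⟩ := (prefix_concat_iff.1 hpre).resolve_left fun heq => by
      simp [← heq] at hlt
    obtain ⟨g, hg⟩ := hq'
    have hgx : g.length < x.length := by
      have := congrArg length hg
      simp only [length_append, length_cons, length_reverse, length_nil] at this hlt
      omega
    have hr' : Rich (g ++ c :: h.reverse ++ [c]) :=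
      hr.of_prefix ⟨e ++ [c], by rw [← hg]; simp⟩
    simpa using (Rich.reverse_eq_of_return hr' (by simpa using hc)).symm
termination_by x.length

/-- If the central letter `c` recurred in `B`, its first return `c B₁ c` would be a palindrome
by richness, and then `c (reverse B₁) c B₁ = (c B₁)(c B₁)` would be a square. -/
lemma Rich.not_mem_of_reverse_append_cons_infix {w B : List α} {c : α} (hr : Rich w)
    (hs : SqFree w) (hB : B.reverse ++ c :: B <:+: w) : c ∉ B := by
  intro hcB
  obtain ⟨B₁, B₂, rfl, hc⟩ := eq_append_cons_of_mem hcB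
  have hret : (c :: B₁.reverse) ++ c :: B₁ ++ [c] <:+: w :=
    .trans ⟨B₂.reverse, B₂, by simp⟩ hB
  have hpal := (hr.of_infix hret).reverse_eq_of_return hc
  refine hs (c :: B₁) (by simp) (.trans ⟨B₂.reverse, c :: B₂, ?_⟩ hB)
  simp [hpal]

/-- Lists of length at most `L` are coded injectively by `i ↦ p[i]?` on `Fin L`. -/
lemma Rich.length_lt_of_forall_length_le {w : List α} (hr : Rich w) {L : ℕ}
    (hL : ∀ p ∈ palFactors w, p.length ≤ L) : w.length < (w.toFinset.card + 1) ^ L := by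
  let code : List α → Fin L → Option α := fun p i => p[(i : ℕ)]?
  have hcard : (palFactors w).card ≤
      (Fintype.piFinset fun _ : Fin L => w.toFinset.insertNone).card := by
    refine Finset.card_le_card_of_injOn code (fun p hp => ?_) (fun p hp q hq hpq => ?_)
    · simp only [Finset.mem_coe, Fintype.mem_piFinset, Finset.mem_insertNone, mem_toFinset]
      intro i a ha
      exact (mem_palFactors.1 hp).1.subset (mem_of_getElem? ha)
    · refine ext_getElem? fun i => ?_
      by_cases hi : i < L
      · exact congrFun hpq ⟨i, hi⟩
      · rw [getElem?_eq_none (by linarith [hL p hp]), getElem?_eq_none (by linarith [hL q hq])]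
  rw [Fintype.card_piFinset, Finset.prod_const, Finset.card_insertNone, Finset.card_univ,
    Fintype.card_fin, rich_iff_card_palFactors.1 hr] at hcard
  omega

/-- A nonempty palindromic factor is `reverse B ++ c :: B` with `B` rich and square-free on
fewer letters, so palindromic factors are short; and a rich word has more palindromic factors
than letters. -/
theorem exists_length_le_of_rich_of_sqFree (n : ℕ) : ∃ N, ∀ w : List α, Rich w → SqFree w →
    w.toFinset.card ≤ n → w.length ≤ N := by
  induction n with
  | zero =>
    refine ⟨0, fun w _ _ hw => ?_⟩
    simp [(toFinset_eq_empty_iff w).1 (Finset.card_eq_zero.1 (Nat.le_zero.1 hw))]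
  | succ n ih =>
    obtain ⟨N, hN⟩ := ih
    refine ⟨(n + 2) ^ (2 * N + 1), fun w hr hs hw => ?_⟩
    have hshort : ∀ p ∈ palFactors w, p.length ≤ 2 * N + 1 := by
      intro p hp
      obtain ⟨hpw, hpal⟩ := mem_palFactors.1 hp
      rcases eq_or_ne p [] with rfl | hne
      · simp
      obtain ⟨B, c, rfl⟩ := (hs.of_infix hpw).exists_eq_reverse_append_cons hpal hne
      have hcB := hr.not_mem_of_reverse_append_cons_infix hs hpw
      have hBw : B <:+: w := .trans ⟨B.reverse ++ [c], [], by simp⟩ hpw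
      have hBcard : B.toFinset.card ≤ n := by
        have hsub : B.toFinset ⊆ w.toFinset.erase c := fun a ha => by
          rw [mem_toFinset] at ha
          exact Finset.mem_erase.2 ⟨fun h => hcB (h ▸ ha), mem_toFinset.2 (hBw.subset ha)⟩
        have hc : c ∈ w.toFinset := mem_toFinset.2 (hpw.subset (by simp))
        have := Finset.card_le_card hsub
        rw [Finset.card_erase_of_mem hc] at this
        omega
      have := hN B (hr.of_infix hBw) (hs.of_infix hBw) hBcard
      simp only [length_append, length_reverse, length_cons]
      omega
    calc w.length ≤ (w.toFinset.card + 1) ^ (2 * N + 1) :=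
          (hr.length_lt_of_forall_length_le hshort).le
      _ ≤ (n + 2) ^ (2 * N + 1) := Nat.pow_le_pow_left (by omega) _

end PalFactors

def zimin : ℕ → List ℕ
  | 0 => []
  | n + 1 => zimin n ++ n :: zimin n

lemma length_zimin (n : ℕ) : (zimin n).length + 1 = 2 ^ n := by
  induction n with
  | zero => rfl
  | succ n ih => simp only [zimin, length_append, length_cons]; omega

lemma mem_zimin {n x : ℕ} : x ∈ zimin n ↔ x < n := by
  induction n with
  | zero => simp [zimin]
  | succ n ih => simp only [zimin, mem_append, mem_cons, ih]; omega

lemma toFinset_zimin (n : ℕ) : (zimin n).toFinset = Finset.range n := by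
  ext; simp [mem_zimin]

lemma reverse_zimin (n : ℕ) : (zimin n).reverse = zimin n := by
  induction n with
  | zero => rfl
  | succ n ih => simp [zimin, ih]

lemma count_zimin_succ (n : ℕ) : (zimin (n + 1)).count n = 1 := by
  simp [zimin, count_eq_zero.2 (fun h => (mem_zimin.1 h).false)]

lemma sqFree_zimin (n : ℕ) : SqFree (zimin n) := by
  induction n with
  | zero => intro u hu h; exact hu (by simpa [zimin] using h)
  | succ n ih =>
    intro u hu h
    by_cases hn : n ∈ u
    · have := h.count_le n
      rw [count_zimin_succ, count_append] at this
      have := count_pos_iff.2 hn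
      omega
    · rcases infix_or_infix_of_infix_append_cons h (by simpa using hn) with h | h
      all_goals exact ih u hu h

/-- The factors `reverse (take i z) ++ n :: take i z` centred at the middle letter of
`zimin (n + 1) = z ++ n :: z` are `2 ^ n` new palindromes. -/
lemma card_palFactors_zimin (n : ℕ) : 2 ^ n ≤ (palFactors (zimin n)).card := by
  induction n with
  | zero => exact Finset.card_pos.2 ⟨[], mem_palFactors.2 ⟨nil_infix, rfl⟩⟩
  | succ n ih =>
    set z := zimin n
    let central : ℕ → List ℕ := fun i => (z.take i).reverse ++ n :: z.take i
    have hz : z.length + 1 = 2 ^ n := length_zimin n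
    have hcentral : (Finset.range (2 ^ n)).image central ⊆ palFactors (zimin (n + 1)) := by
      simp only [Finset.image_subset_iff, mem_palFactors]
      exact fun i _ => ⟨infix_append_cons_of_reverse_eq (reverse_zimin n) n i, by simp [central]⟩
    have hcard : ((Finset.range (2 ^ n)).image central).card = 2 ^ n := by
      rw [Finset.card_image_of_injOn, Finset.card_range]
      intro i hi j hj hij
      have := congrArg length hij
      simp only [Finset.coe_range, Set.mem_Iio, central, length_append, length_reverse,
        length_cons, length_take] at this hi hj
      omega
    have hdisj : Disjoint (palFactors z) ((Finset.range (2 ^ n)).image central) := by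
      refine Finset.disjoint_left.2 fun p hp hpc => ?_
      obtain ⟨i, -, rfl⟩ := Finset.mem_image.1 hpc
      exact (mem_zimin.1 ((mem_palFactors.1 hp).1.subset (by simp [central]))).false
    have hold : palFactors z ⊆ palFactors (zimin (n + 1)) :=
      palFactors_mono ⟨[], n :: z, by simp [z, zimin]⟩
    calc 2 ^ (n + 1) ≤ (palFactors z).card + ((Finset.range (2 ^ n)).image central).card := by
          rw [hcard, pow_succ]; omega
      _ = (palFactors z ∪ (Finset.range (2 ^ n)).image central).card :=
          (Finset.card_union_of_disjoint hdisj).symm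
      _ ≤ _ := Finset.card_le_card (Finset.union_subset hold hcentral)

lemma rich_zimin (n : ℕ) : Rich (zimin n) := by
  rw [rich_iff_length_lt_card_palFactors]
  have := card_palFactors_zimin n
  have := length_zimin n
  omega

theorem rsf_ge_two_pow_sub_one_general (n : ℕ) :
    (∃ w : List ℕ, Rich w ∧ SqFree w ∧ w.toFinset.card = n ∧ 2 ^ n - 1 ≤ w.length) ∧
    2 ^ n - 1 ≤ rsf n := by
  have hlen : (zimin n).length = 2 ^ n - 1 := by have := length_zimin n; omega
  have hcard : (zimin n).toFinset.card = n := by simp [toFinset_zimin]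
  refine ⟨⟨zimin n, rich_zimin n, sqFree_zimin n, hcard, hlen.ge⟩,
    le_csSup ?_ ⟨zimin n, rich_zimin n, sqFree_zimin n, hcard, hlen⟩⟩
  obtain ⟨N, hN⟩ := exists_length_le_of_rich_of_sqFree (α := ℕ) n
  exact ⟨N, by rintro _ ⟨w, hr, hs, hw, rfl⟩; exact hN w hr hs hw.le⟩

theorem rsf_ge_two_pow_sub_one (n : ℕ) (hn : 1 ≤ n) :
    (∃ w : List ℕ, Rich w ∧ SqFree w ∧ w.toFinset.card = n ∧ 2 ^ n - 1 ≤ w.length) ∧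
    2 ^ n - 1 ≤ rsf n :=
  rsf_ge_two_pow_sub_one_general n
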